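/- Let S be a commutative noetherian ring, let A and B be matrices over S, and let x ∈ S. If Cok B is a direct summand of Cok A, then there exists an integer n ≥ 0 such that Cok(xB) is a direct summand of Cok(xA) ⊕ (S/(x))^n. -/

import Mathlib

universe u

theorem split_cok {R : Type u} {M N : Type u} [CommRing R] [AddCommGroup M] [AddCommGroup N]
    [Module R M] [Module R N] (f : M →ₗ[R] N) (s : N →ₗ[R] M)
    (hfs : ∀ y, f (s y) = y) :
    ∃ (K : Type u) (_ : AddCommGroup K) (_ : Module R K), Nonempty (M ≃ₗ[R] N × K) := by
  refine ⟨↥(LinearMap.ker f), inferInstance, inferInstance, ⟨LinearEquiv.ofLinear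
    (f.prod ((LinearMap.id - s ∘ₗ f).codRestrict (LinearMap.ker f) fun m => by
      simp [hfs]))
    ((s ∘ₗ LinearMap.fst R N _) + ((LinearMap.ker f).subtype ∘ₗ LinearMap.snd R N _))
    ?_ ?_⟩⟩
  · apply LinearMap.ext
    rintro ⟨y, z, hz⟩
    rw [LinearMap.mem_ker] at hz
    simp [hfs, hz, Prod.ext_iff, Subtype.ext_iff]
  · apply LinearMap.ext
    intro m
    simp

theorem smul_mulVecLin {S : Type u} [CommRing S] {m n : ℕ} (A : Matrix (Fin m) (Fin n) S)
    (x : S) (v : Fin n → S) : (x • A).mulVecLin v = x • A.mulVecLin v := by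
  simp [Matrix.mulVecLin_apply, Matrix.smul_mulVec]

theorem sum_single_mulVecLin {S : Type u} [CommRing S] {m n : ℕ} (B : Matrix (Fin m) (Fin n) S)
    (c : Fin n → S) : ∑ j, c j • B.mulVecLin (Pi.single j 1) = B.mulVecLin c := by
  have h : ∀ j : Fin n, c j • B.mulVecLin (Pi.single j 1) = B.mulVecLin (Pi.single j (c j)) := by
    intro j
    rw [← map_smul]
    congr 1
    ext i
    simp [Pi.single_apply, mul_comm]
  simp_rw [h]
  rw [← map_sum]
  congr 1
  exact Finset.univ_sum_single c


/-- The cokernel of the `S`-linear map `S^q → S^p` given by a `p × q` matrix `A`. -/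
abbrev MatCok {S : Type u} [CommRing S] {p q : ℕ} (A : Matrix (Fin p) (Fin q) S) : Type u :=
  (Fin p → S) ⧸ LinearMap.range A.mulVecLin

/-- Lemma 4(1): if `Cok B` is a direct summand of `Cok A`, then `Cok(xB)` is a direct
summand of `Cok(xA) ⊕ (S/(x))^k` for some `k ≥ 0`. -/
theorem stmt9 {S : Type u} [CommRing S] [IsNoetherianRing S] {m n p q : ℕ}
    (A : Matrix (Fin m) (Fin n) S) (B : Matrix (Fin p) (Fin q) S) (x : S)
    (h : ∃ (N : Type u) (_ : AddCommGroup N) (_ : Module S N),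
      Nonempty (MatCok A ≃ₗ[S] (MatCok B × N))) :
    ∃ (k : ℕ) (N : Type u) (_ : AddCommGroup N) (_ : Module S N),
      Nonempty ((MatCok (x • A) × (Fin k → S ⧸ Ideal.span {x})) ≃ₗ[S]
        (MatCok (x • B) × N)) := by
  classical
  obtain ⟨N, _, _, ⟨e⟩⟩ := h
  set RA : Submodule S (Fin m → S) := LinearMap.range A.mulVecLin with hRAdef
  set RB : Submodule S (Fin p → S) := LinearMap.range B.mulVecLin with hRBdef
  set RxA : Submodule S (Fin m → S) := LinearMap.range (x • A).mulVecLin with hRxAdef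
  set RxB : Submodule S (Fin p → S) := LinearMap.range (x • B).mulVecLin with hRxBdef
  set I : Ideal S := Ideal.span {x} with hIdef
  -- the split surjection on the original cokernels
  set π : MatCok A →ₗ[S] MatCok B := (LinearMap.fst S (MatCok B) N) ∘ₗ e.toLinearMap with hπdef
  set σ : MatCok B →ₗ[S] MatCok A := e.symm.toLinearMap ∘ₗ LinearMap.inl S (MatCok B) N
    with hσdef
  have hπσ : ∀ w, π (σ w) = w := fun w => by simp [hπdef, hσdef]
  -- lift π and σ to the free modules
  obtain ⟨P, hP⟩ := Module.projective_lifting_property RB.mkQ (π ∘ₗ RA.mkQ)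
    (Submodule.mkQ_surjective RB)
  obtain ⟨Q, hQ⟩ := Module.projective_lifting_property RA.mkQ (σ ∘ₗ RB.mkQ)
    (Submodule.mkQ_surjective RA)
  have hP' : ∀ y, RB.mkQ (P y) = π (RA.mkQ y) := fun y => LinearMap.congr_fun hP y
  have hQ' : ∀ y, RA.mkQ (Q y) = σ (RB.mkQ y) := fun y => LinearMap.congr_fun hQ y
  -- the defect of P ∘ Q from the identity lands in RB; lift it through B
  have hD : ∀ y, P (Q y) - y ∈ RB := by
    intro y
    have h1 : RB.mkQ (P (Q y) - y) = 0 := by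
      rw [map_sub, hP' (Q y), hQ' y, hπσ, sub_self]
    rwa [Submodule.mkQ_apply, Submodule.Quotient.mk_eq_zero] at h1
  obtain ⟨C, hC0⟩ := Module.projective_lifting_property B.mulVecLin.rangeRestrict
    ((P ∘ₗ Q - LinearMap.id).codRestrict RB (fun y => hD y))
    (LinearMap.surjective_rangeRestrict B.mulVecLin)
  have hC : ∀ y, B.mulVecLin (C y) = P (Q y) - y := by
    intro y
    have := LinearMap.congr_fun hC0 y
    exact congrArg Subtype.val this
  -- P and Q descend to the x-scaled cokernels
  have hPRA : ∀ z, z ∈ RA → P z ∈ RB := by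
    intro z hz
    have h1 : RB.mkQ (P z) = 0 := by
      rw [hP' z, Submodule.mkQ_apply, (Submodule.Quotient.mk_eq_zero RA).mpr hz, map_zero]
    rwa [Submodule.mkQ_apply, Submodule.Quotient.mk_eq_zero] at h1
  have hQRB : ∀ z, z ∈ RB → Q z ∈ RA := by
    intro z hz
    have h1 : RA.mkQ (Q z) = 0 := by
      rw [hQ' z, Submodule.mkQ_apply, (Submodule.Quotient.mk_eq_zero RB).mpr hz, map_zero]
    rwa [Submodule.mkQ_apply, Submodule.Quotient.mk_eq_zero] at h1
  have hPx : RxA ≤ RxB.comap P := by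
    rintro z ⟨v, rfl⟩
    obtain ⟨w, hw⟩ := hPRA (A.mulVecLin v) ⟨v, rfl⟩
    refine Submodule.mem_comap.mpr ⟨w, ?_⟩
    rw [smul_mulVecLin, smul_mulVecLin, hw, ← map_smul]
  have hQx : RxB ≤ RxA.comap Q := by
    rintro z ⟨v, rfl⟩
    obtain ⟨w, hw⟩ := hQRB (B.mulVecLin v) ⟨v, rfl⟩
    refine Submodule.mem_comap.mpr ⟨w, ?_⟩
    rw [smul_mulVecLin, smul_mulVecLin, hw, ← map_smul]
  set Pbar : MatCok (x • A) →ₗ[S] MatCok (x • B) := Submodule.mapQ RxA RxB P hPx with hPbardef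
  set Qbar : MatCok (x • B) →ₗ[S] MatCok (x • A) := Submodule.mapQ RxB RxA Q hQx with hQbardef
  -- the map (S/x)^q → MatCok (x • B) sending e_j to the class of the j-th column of B
  have hgker : ∀ j : Fin q,
      I ≤ LinearMap.ker (RxB.mkQ ∘ₗ LinearMap.toSpanSingleton S (Fin p → S)
        (B.mulVecLin (Pi.single j 1))) := by
    intro j
    rw [hIdef, Ideal.span, Submodule.span_singleton_le_iff_mem]
    simp only [LinearMap.mem_ker, LinearMap.comp_apply,
      LinearMap.toSpanSingleton_apply, Submodule.mkQ_apply, Submodule.Quotient.mk_eq_zero]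
    exact ⟨Pi.single j 1, (smul_mulVecLin B x (Pi.single j 1)).symm ▸ rfl⟩
  set g : Fin q → (S ⧸ I) →ₗ[S] MatCok (x • B) := fun j =>
    Submodule.liftQ I (RxB.mkQ ∘ₗ LinearMap.toSpanSingleton S (Fin p → S)
      (B.mulVecLin (Pi.single j 1))) (hgker j) with hgdef
  set E : (Fin q → S ⧸ I) →ₗ[S] MatCok (x • B) :=
    ∑ j : Fin q, (g j) ∘ₗ (LinearMap.proj j) with hEdef
  -- the map MatCok (x • B) → (S/x)^q induced by C
  have hcker : ∀ j : Fin q,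
      RxB ≤ LinearMap.ker (I.mkQ ∘ₗ (LinearMap.proj j : (Fin q → S) →ₗ[S] S) ∘ₗ C) := by
    rintro j z ⟨v, rfl⟩
    simp only [LinearMap.mem_ker, LinearMap.comp_apply, LinearMap.proj_apply,
      Submodule.mkQ_apply, Submodule.Quotient.mk_eq_zero]
    rw [smul_mulVecLin, map_smul]
    exact Ideal.mem_span_singleton.mpr ⟨C (B.mulVecLin v) j, rfl⟩
  set c : Fin q → MatCok (x • B) →ₗ[S] (S ⧸ I) := fun j =>
    Submodule.liftQ RxB (I.mkQ ∘ₗ (LinearMap.proj j : (Fin q → S) →ₗ[S] S) ∘ₗ C) (hcker j)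
    with hcdef
  set Cbar : MatCok (x • B) →ₗ[S] (Fin q → S ⧸ I) := LinearMap.pi c with hCbardef
  -- the split surjection
  set f : (MatCok (x • A) × (Fin q → S ⧸ I)) →ₗ[S] MatCok (x • B) := Pbar.coprod E with hfdef
  set s : MatCok (x • B) →ₗ[S] (MatCok (x • A) × (Fin q → S ⧸ I)) := Qbar.prod (-Cbar)
    with hsdef
  have hfs : ∀ w, f (s w) = w := by
    intro w
    obtain ⟨y, rfl⟩ := Submodule.mkQ_surjective RxB w
    have hE : E (Cbar (RxB.mkQ y)) = RxB.mkQ (P (Q y) - y) := by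
      rw [hEdef]
      simp only [LinearMap.sum_apply, LinearMap.comp_apply, LinearMap.proj_apply]
      have hcomp : ∀ j : Fin q,
          (g j) ((Cbar (RxB.mkQ y)) j) = RxB.mkQ ((C y j) • B.mulVecLin (Pi.single j 1)) := by
        intro j
        rw [hCbardef, hgdef]
        simp only [LinearMap.pi_apply, hcdef]
        rw [Submodule.mkQ_apply, Submodule.liftQ_apply]
        simp only [LinearMap.comp_apply, LinearMap.proj_apply, Submodule.mkQ_apply]
        rw [Submodule.liftQ_apply]
        simp [LinearMap.toSpanSingleton_apply]
      simp_rw [hcomp]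
      rw [← map_sum, sum_single_mulVecLin, hC]
    rw [hfdef, hsdef]
    simp only [LinearMap.coprod_apply, LinearMap.prod_apply, LinearMap.neg_apply, Function.prod,
      map_neg]
    rw [hE]
    have hPQ : Pbar (Qbar (RxB.mkQ y)) = RxB.mkQ (P (Q y)) := by
      rw [hPbardef, hQbardef, Submodule.mkQ_apply, Submodule.mapQ_apply, Submodule.mapQ_apply,
        Submodule.mkQ_apply]
    rw [hPQ, map_sub]
    abel
  exact ⟨q, split_cok f s hfs⟩
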